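/- Let p be an integer-valued supermodular set-function on the subsets of a nonempty finite set S with p(∅) = 0, and let m be a decreasingly minimal element of Ḃ(p). Define C₀(m) := ∅ and, recursively for i ≥ 1 as long as C_{i−1}(m) ≠ S: β_i(m) := max{ m(s) : s ∈ S ∖ C_{i−1}(m) } and C_i(m) := the intersection of all m-tight sets containing {s ∈ S : m(s) ≥ β_i(m)}. Then C_{i−1}(m) ⊊ C_i(m) for every i (so the recursion terminates with some C_{q(m)}(m) = S), and for any two decreasingly minimal elements m and z of Ḃ(p) one has q(m) = q(z), and β_i(m) = β_i(z) and C_i(m) = C_i(z) for every i = 1, …, q(m); that is, the chain C₁ ⊂ C₂ ⊂ ⋯ ⊂ C_q and the sequence β₁ > β₂ > ⋯ > β_q do not depend on the choice of the dec-min element. -/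

import Mathlib

open Finset

variable {α : Type*}

/-- Integer-valued supermodular set-function. -/
def Supermodular [DecidableEq α] (p : Finset α → ℤ) : Prop :=
  ∀ X Y : Finset α, p X + p Y ≤ p (X ∩ Y) + p (X ∪ Y)

/-- The M-convex set `Ḃ(p)` of integral elements of the base-polyhedron `B'(p)`:
all `m : α → ℤ` with `m̃(X) ≥ p(X)` for every `X` and `m̃(S) = p(S)`. -/
def Bdot [Fintype α] (p : Finset α → ℤ) : Set (α → ℤ) :=
  {m | (∀ X : Finset α, p X ≤ ∑ s ∈ X, m s) ∧ (∑ s, m s) = p Finset.univ}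

/-- `x↓`: the values of `x` arranged in nonincreasing order. -/
def sortedDesc [Fintype α] (x : α → ℤ) : List ℤ :=
  ((Finset.univ.val.map x).sort (· ≤ ·)).reverse

/-- `x↑`: the values of `x` arranged in nondecreasing order. -/
def sortedAsc [Fintype α] (x : α → ℤ) : List ℤ :=
  (Finset.univ.val.map x).sort (· ≤ ·)

/-- `x ≤_dec y`: `x↓` is lexicographically less than or equal to `y↓`. -/
def DecLE [Fintype α] (x y : α → ℤ) : Prop :=
  sortedDesc x = sortedDesc y ∨ List.Lex (· < ·) (sortedDesc x) (sortedDesc y)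

/-- `x ≤_inc y`: `x↑` is lexicographically less than or equal to `y↑`. -/
def IncLE [Fintype α] (x y : α → ℤ) : Prop :=
  sortedAsc x = sortedAsc y ∨ List.Lex (· < ·) (sortedAsc x) (sortedAsc y)

/-- `m` is a decreasingly minimal element of `Bdot p`. -/
def DecMin [Fintype α] (p : Finset α → ℤ) (m : α → ℤ) : Prop :=
  m ∈ Bdot p ∧ ∀ y ∈ Bdot p, DecLE m y

/-!
Any two dec-min elements are joined by a path of dec-min elements in which each step moves one
unit from an element `s` to an element `t` with `m t = m s - 1`: at a largest discrepancy between
`m` and `z` the exchange property of `Ḃ(p)` supplies such a move toward `z`, and dec-minimality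
excludes `m t < m s - 1`. Such a move only permutes values, and it preserves the tightness of
every set containing both or neither of `s, t`. The key point is that, for dec-min `m`, the
smallest tight set containing `{m ≥ b}` carries only values `≥ b - 1`; this pins down how `s`
and `t` sit relative to each of these sets, so the move changes neither the chain nor the `βᵢ`.
-/

theorem List.lex_of_count_lt {β : Type*} [LinearOrder β] :
    ∀ {L M : List β}, L.Pairwise (· ≥ ·) → M.Pairwise (· ≥ ·) → ∀ {a : β},
      M.count a < L.count a → (∀ v, a < v → M.count v = L.count v) → List.Lex (· < ·) M L
  | [], _, _, _, _, hc, _ => by simp at hc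
  | _ :: _, [], _, _, _, _, _ => List.Lex.nil
  | x :: L, y :: M, hL, hM, a, hc, heq => by
    have hx : ∀ e ∈ x :: L, e ≤ x := fun e he => by
      rcases List.mem_cons.1 he with rfl | he
      exacts [le_rfl, List.rel_of_pairwise_cons hL he]
    rcases lt_trichotomy y x with h | rfl | h
    · exact List.Lex.rel h
    · refine List.Lex.cons (List.lex_of_count_lt hL.of_cons hM.of_cons (a := a) ?_ fun v hv => ?_)
      · simp only [List.count_cons] at hc
        omega
      · have := heq v hv
        simp only [List.count_cons] at this
        omega
    · exfalso
      rcases le_or_gt y a with hya | hay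
      · have : (x :: L).count a = 0 :=
          List.count_eq_zero.2 fun ha => (hx a ha).not_gt (h.trans_le hya)
        omega
      · have : (x :: L).count y = 0 := List.count_eq_zero.2 fun hy => (hx y hy).not_gt h
        have := heq y hay
        have : 0 < (y :: M).count y := List.count_pos_iff.2 List.mem_cons_self
        omega

def IsTight (p : Finset α → ℤ) (m : α → ℤ) (X : Finset α) : Prop :=
  ∑ v ∈ X, m v = p X

instance (p : Finset α → ℤ) (m : α → ℤ) : DecidablePred (IsTight p m) :=
  fun _ => inferInstanceAs (Decidable (_ = _))

section Transfer

variable [DecidableEq α]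

def transfer (m : α → ℤ) (s t : α) : α → ℤ :=
  fun u => m u - (if u = s then 1 else 0) + (if u = t then 1 else 0)

variable {m : α → ℤ} {s t : α}

theorem transfer_apply_left (hst : s ≠ t) : transfer m s t s = m s - 1 := by
  simp [transfer, hst]

theorem transfer_apply_right (hst : s ≠ t) : transfer m s t t = m t + 1 := by
  simp [transfer, hst.symm]

theorem transfer_apply_of_ne {u : α} (hus : u ≠ s) (hut : u ≠ t) : transfer m s t u = m u := by
  simp [transfer, hus, hut]

theorem transfer_transfer : transfer (transfer m s t) t s = m := by
  funext u
  simp only [transfer]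
  split_ifs <;> omega

theorem transfer_eq_comp_swap (hst : s ≠ t) (hv : m t = m s - 1) :
    transfer m s t = m ∘ Equiv.swap s t := by
  funext u
  rcases eq_or_ne u s with rfl | hus
  · simp [transfer_apply_left hst, hv]
  rcases eq_or_ne u t with rfl | hut
  · simp [transfer_apply_right hst, hv]
  · simp [transfer_apply_of_ne hus hut, Equiv.swap_apply_of_ne_of_ne hus hut]

theorem sum_transfer (X : Finset α) :
    ∑ u ∈ X, transfer m s t u =
      ∑ u ∈ X, m u - (if s ∈ X then 1 else 0) + (if t ∈ X then 1 else 0) := by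
  simp only [transfer, Finset.sum_add_distrib, Finset.sum_sub_distrib, Finset.sum_ite_eq']

theorem isTight_transfer_iff {p : Finset α → ℤ} {X : Finset α} (h : s ∈ X ↔ t ∈ X) :
    IsTight p (transfer m s t) X ↔ IsTight p m X := by
  unfold IsTight
  rw [sum_transfer]
  by_cases hs : s ∈ X
  · simp [hs, h.1 hs]
  · simp [hs, mt h.2 hs]

end Transfer

section Fintype

variable [Fintype α]

theorem coe_sortedDesc (x : α → ℤ) : (sortedDesc x : Multiset ℤ) = univ.val.map x := by
  rw [sortedDesc, Multiset.coe_reverse, Multiset.sort_eq]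

theorem pairwise_sortedDesc (x : α → ℤ) : (sortedDesc x).Pairwise (· ≥ ·) :=
  List.pairwise_reverse.2 (Multiset.pairwise_sort _ _)

theorem count_sortedDesc (x : α → ℤ) (a : ℤ) :
    (sortedDesc x).count a = (univ.val.map x).count a := by
  rw [← coe_sortedDesc, Multiset.coe_count]

theorem sortedDesc_comp_equiv (x : α → ℤ) (σ : Equiv.Perm α) :
    sortedDesc (x ∘ σ) = sortedDesc x := by
  have hσ : univ.val.map σ = univ.val := by
    simpa only [Finset.map_val, Equiv.coe_toEmbedding] using
      congrArg Finset.val (Finset.map_univ_equiv σ)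
  rw [sortedDesc, sortedDesc, ← Multiset.map_map, hσ]

def superlevel (m : α → ℤ) (b : ℤ) : Finset α :=
  {u | b ≤ m u}

theorem mem_superlevel {m : α → ℤ} {b : ℤ} {u : α} : u ∈ superlevel m b ↔ b ≤ m u := by
  simp [superlevel]

theorem superlevel_anti {m : α → ℤ} {b b' : ℤ} (h : b ≤ b') : superlevel m b' ⊆ superlevel m b :=
  fun _ hu => mem_superlevel.2 (h.trans (mem_superlevel.1 hu))

def distL1 (x y : α → ℤ) : ℕ :=
  ∑ u, (x u - y u).natAbs

theorem distL1_comm (x y : α → ℤ) : distL1 x y = distL1 y x :=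
  Finset.sum_congr rfl fun _ _ => by omega

variable {p : Finset α → ℤ} {m z : α → ℤ}

section DecidableEq

variable [DecidableEq α]

theorem isTight_inter (hp : Supermodular p) (hm : m ∈ Bdot p) {X Y : Finset α}
    (hX : IsTight p m X) (hY : IsTight p m Y) : IsTight p m (X ∩ Y) := by
  unfold IsTight at *
  linarith [Finset.sum_union_inter (s₁ := X) (s₂ := Y) (f := m), hm.1 (X ∩ Y), hm.1 (X ∪ Y),
    hp X Y]

theorem isTight_union (hp : Supermodular p) (hm : m ∈ Bdot p) {X Y : Finset α}
    (hX : IsTight p m X) (hY : IsTight p m Y) : IsTight p m (X ∪ Y) := by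
  unfold IsTight at *
  linarith [Finset.sum_union_inter (s₁ := X) (s₂ := Y) (f := m), hm.1 (X ∩ Y), hm.1 (X ∪ Y),
    hp X Y]

def tightClosure (p : Finset α → ℤ) (m : α → ℤ) (T : Finset α) : Finset α :=
  ({X | IsTight p m X ∧ T ⊆ X} : Finset (Finset α)).inf id

variable {T T' X : Finset α}

theorem mem_tightClosure {u : α} :
    u ∈ tightClosure p m T ↔ ∀ X, IsTight p m X → T ⊆ X → u ∈ X := by
  simp [tightClosure, Finset.mem_inf]

theorem tightClosure_subset (hX : IsTight p m X) (hTX : T ⊆ X) : tightClosure p m T ⊆ X :=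
  Finset.inf_le (mem_filter.2 ⟨mem_univ _, hX, hTX⟩)

theorem subset_tightClosure : T ⊆ tightClosure p m T :=
  Finset.le_inf fun _ hX => (mem_filter.1 hX).2.2

theorem tightClosure_mono (h : T ⊆ T') : tightClosure p m T ⊆ tightClosure p m T' :=
  fun _ hu => mem_tightClosure.2 fun X hX hT'X => mem_tightClosure.1 hu X hX (h.trans hT'X)

theorem isTight_tightClosure (hp : Supermodular p) (hm : m ∈ Bdot p) :
    IsTight p m (tightClosure p m T) :=
  Finset.inf_induction hm.2 (fun _ h₁ _ h₂ => isTight_inter hp hm h₁ h₂)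
    fun _ hX => (mem_filter.1 hX).2.1

theorem tightClosure_congr {m' : α → ℤ}
    (h : ∀ X, IsTight p m X ∧ T ⊆ X ↔ IsTight p m' X ∧ T' ⊆ X) :
    tightClosure p m T = tightClosure p m' T' := by
  simp only [tightClosure, h]

theorem IsTight.mem_of_transfer_mem_Bdot (hx : transfer m s t ∈ Bdot p) (hX : IsTight p m X)
    (hs : s ∈ X) : t ∈ X := by
  by_contra ht
  have := hx.1 X
  rw [sum_transfer, if_pos hs, if_neg ht] at this
  unfold IsTight at hX
  omega

theorem transfer_mem_Bdot_iff (hm : m ∈ Bdot p) :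
    transfer m s t ∈ Bdot p ↔ ∀ X, IsTight p m X → s ∈ X → t ∈ X := by
  refine ⟨fun hx X hX hs => hX.mem_of_transfer_mem_Bdot hx hs, fun h => ⟨fun X => ?_, ?_⟩⟩
  · have hmX := hm.1 X
    rw [sum_transfer]
    by_cases hs : s ∈ X
    · by_cases ht : t ∈ X
      · simp only [hs, ht, if_true]
        omega
      · have : ¬ IsTight p m X := fun hX => ht (h X hX hs)
        unfold IsTight at this
        simp only [hs, ht, if_true, if_false]
        omega
    · simp only [hs, if_false]
      split_ifs <;> omega
  · have := hm.2
    rw [sum_transfer, if_pos (mem_univ s), if_pos (mem_univ t)]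
    omega

theorem mem_iff_of_isTight_transfer (hm : m ∈ Bdot p) (hx : transfer m s t ∈ Bdot p)
    (hX : IsTight p m X) (hX' : IsTight p (transfer m s t) X) : s ∈ X ↔ t ∈ X :=
  ⟨hX.mem_of_transfer_mem_Bdot hx,
    hX'.mem_of_transfer_mem_Bdot (by rwa [transfer_transfer])⟩

theorem exists_transfer_mem_Bdot (hp : Supermodular p) (hm : m ∈ Bdot p) (hz : z ∈ Bdot p)
    (hs : z s < m s) : ∃ t, m t < z t ∧ transfer m s t ∈ Bdot p := by
  set X₀ := tightClosure p m {s}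
  have hX₀ : IsTight p m X₀ := isTight_tightClosure hp hm
  have hsX₀ : s ∈ X₀ := subset_tightClosure (mem_singleton_self s)
  obtain ⟨t, htX₀, ht⟩ : ∃ t ∈ X₀, m t < z t := by
    by_contra! h
    have := Finset.sum_lt_sum h ⟨s, hsX₀, hs⟩
    have := hz.1 X₀
    unfold IsTight at hX₀
    omega
  refine ⟨t, ht, (transfer_mem_Bdot_iff hm).2 fun X hX hsX => ?_⟩
  exact tightClosure_subset hX (singleton_subset_iff.2 hsX) htX₀

theorem map_univ_transfer (hst : s ≠ t) :
    ∃ R : Multiset ℤ, univ.val.map m = m s ::ₘ m t ::ₘ R ∧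
      univ.val.map (transfer m s t) = (m s - 1) ::ₘ (m t + 1) ::ₘ R := by
  set Y := (univ.erase s).erase t
  have hY : (univ : Finset α).val = s ::ₘ t ::ₘ Y.val := by
    rw [← insert_val_of_notMem (notMem_erase t _),
      insert_erase (mem_erase.2 ⟨hst.symm, mem_univ t⟩),
      ← insert_val_of_notMem (notMem_erase s _), insert_erase (mem_univ s)]
  refine ⟨Y.val.map m, by rw [hY]; simp, ?_⟩
  rw [hY, Multiset.map_cons, Multiset.map_cons, transfer_apply_left hst,
    transfer_apply_right hst]
  congr 2
  refine Multiset.map_congr rfl fun u hu => ?_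
  have hu : u ∈ Y := Finset.mem_def.2 hu
  simp only [Y, mem_erase] at hu
  exact transfer_apply_of_ne hu.2.1 hu.1

theorem DecMin.sub_one_le_of_transfer (hm : DecMin p m) (hst : s ≠ t)
    (hx : transfer m s t ∈ Bdot p) : m s - 1 ≤ m t := by
  by_contra! h
  obtain ⟨R, hR, hR'⟩ := map_univ_transfer (m := m) hst
  have hlt : sortedDesc (transfer m s t) < sortedDesc m := by
    refine List.lex_of_count_lt (pairwise_sortedDesc m) (pairwise_sortedDesc _) (a := m s) ?_
      fun v hv => ?_
    all_goals
      rw [count_sortedDesc, count_sortedDesc, hR, hR']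
      simp only [Multiset.count_cons]
      split_ifs <;> omega
  rcases hm.2 _ hx with he | hl
  · exact List.lt_irrefl _ (he ▸ hlt)
  · exact List.lt_asymm hl hlt

theorem DecMin.transfer_of_eq_sub_one (hm : DecMin p m) (hst : s ≠ t)
    (hx : transfer m s t ∈ Bdot p) (hv : m t = m s - 1) : DecMin p (transfer m s t) := by
  have hsorted : sortedDesc (transfer m s t) = sortedDesc m := by
    rw [transfer_eq_comp_swap hst hv, sortedDesc_comp_equiv]
  exact ⟨hx, fun y hy => by simpa only [DecLE, hsorted] using hm.2 y hy⟩

theorem DecMin.sub_one_le_of_mem_tightClosure_singleton (hm : DecMin p m) {u v : α}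
    (hv : v ∈ tightClosure p m {u}) : m u - 1 ≤ m v := by
  rcases eq_or_ne v u with rfl | hvu
  · omega
  refine hm.sub_one_le_of_transfer hvu.symm ((transfer_mem_Bdot_iff hm.1).2 fun X hX huX => ?_)
  exact tightClosure_subset hX (singleton_subset_iff.2 huX) hv

theorem DecMin.sub_one_le_of_mem_tightClosure (hp : Supermodular p) (h0 : p ∅ = 0)
    (hm : DecMin p m) {b : ℤ} {v : α} (hv : v ∈ tightClosure p m (superlevel m b)) :
    b - 1 ≤ m v := by
  -- `{m ≥ b}` lies in the tight union of the smallest tight sets of its singletons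
  set X := (superlevel m b).sup fun u => tightClosure p m {u}
  have hX : IsTight p m X :=
    Finset.sup_induction (by simp [IsTight, h0]) (fun _ h₁ _ h₂ => isTight_union hp hm.1 h₁ h₂)
      fun _ _ => isTight_tightClosure hp hm.1
  have hsub : superlevel m b ⊆ X := fun u hu =>
    Finset.mem_sup.2 ⟨u, hu, subset_tightClosure (mem_singleton_self u)⟩
  obtain ⟨u, hu, hvu⟩ := Finset.mem_sup.1 (tightClosure_subset hX hsub hv)
  have := hm.sub_one_le_of_mem_tightClosure_singleton hvu
  have := mem_superlevel.1 hu
  omega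

end DecidableEq

end Fintype

section Chain

variable [Fintype α] [DecidableEq α] {p : Finset α → ℤ} {m z : α → ℤ} {s t : α}

theorem superlevel_transfer_subset_iff {X : Finset α} {b : ℤ} (hs : s ∈ X) (ht : t ∈ X) :
    superlevel (transfer m s t) b ⊆ X ↔ superlevel m b ⊆ X := by
  have hout : ∀ u ∉ X, transfer m s t u = m u := fun u hu =>
    transfer_apply_of_ne (fun h => hu (h ▸ hs)) (fun h => hu (h ▸ ht))
  constructor <;> intro h u hu <;> by_contra huX
  · exact huX (h (mem_superlevel.2 ((hout u huX).symm ▸ mem_superlevel.1 hu)))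
  · exact huX (h (mem_superlevel.2 ((hout u huX) ▸ mem_superlevel.1 hu)))

theorem superlevel_transfer_of_lt {b : ℤ} (hst : s ≠ t) (hv : m t = m s - 1) (hb : m s < b) :
    superlevel (transfer m s t) b = superlevel m b := by
  ext u
  rw [mem_superlevel, mem_superlevel]
  rcases eq_or_ne u s with rfl | hus
  · rw [transfer_apply_left hst]
    omega
  rcases eq_or_ne u t with rfl | hut
  · rw [transfer_apply_right hst]
    omega
  rw [transfer_apply_of_ne hus hut]

/-- Here every tight set in either family contains both `s` and `t`. -/
theorem tightClosure_superlevel_transfer_of_le (hm : m ∈ Bdot p) (hst : s ≠ t)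
    (hx : transfer m s t ∈ Bdot p) (hv : m t = m s - 1) {b : ℤ} (hb : b ≤ m s) :
    tightClosure p (transfer m s t) (superlevel (transfer m s t) b) =
      tightClosure p m (superlevel m b) := by
  have hback : transfer (transfer m s t) t s ∈ Bdot p := by
    rwa [transfer_transfer]
  refine tightClosure_congr fun X => ⟨fun ⟨hX, hsub⟩ => ?_, fun ⟨hX, hsub⟩ => ?_⟩
  · have ht : t ∈ X := hsub (mem_superlevel.2 (by rw [transfer_apply_right hst]; omega))
    have hs : s ∈ X := hX.mem_of_transfer_mem_Bdot hback ht
    exact ⟨(isTight_transfer_iff ⟨fun _ => ht, fun _ => hs⟩).1 hX,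
      (superlevel_transfer_subset_iff hs ht).1 hsub⟩
  · have hs : s ∈ X := hsub (mem_superlevel.2 hb)
    have ht : t ∈ X := hX.mem_of_transfer_mem_Bdot hx hs
    exact ⟨(isTight_transfer_iff ⟨fun _ => ht, fun _ => hs⟩).2 hX,
      (superlevel_transfer_subset_iff hs ht).2 hsub⟩

/-- Here both closures avoid `s` and `t`, so each is tight for the other vector. -/
theorem DecMin.tightClosure_superlevel_transfer_of_lt (hp : Supermodular p) (h0 : p ∅ = 0)
    (hm : DecMin p m) (hst : s ≠ t) (hx : transfer m s t ∈ Bdot p) (hv : m t = m s - 1)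
    {b : ℤ} (hb : m s < b) :
    tightClosure p (transfer m s t) (superlevel (transfer m s t) b) =
      tightClosure p m (superlevel m b) := by
  have hm' : DecMin p (transfer m s t) := hm.transfer_of_eq_sub_one hst hx hv
  have hback : transfer (transfer m s t) t s ∈ Bdot p := by
    rw [transfer_transfer]
    exact hm.1
  have hsuper := superlevel_transfer_of_lt hst hv hb
  set A := tightClosure p m (superlevel m b)
  set A' := tightClosure p (transfer m s t) (superlevel (transfer m s t) b)
  have htA : t ∉ A := fun h => by
    have := hm.sub_one_le_of_mem_tightClosure hp h0 h
    omega
  have hsA : s ∉ A := fun h =>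
    htA ((isTight_tightClosure hp hm.1).mem_of_transfer_mem_Bdot hx h)
  have hsA' : s ∉ A' := fun h => by
    have := hm'.sub_one_le_of_mem_tightClosure hp h0 h
    rw [transfer_apply_left hst] at this
    omega
  have htA' : t ∉ A' := fun h =>
    hsA' ((isTight_tightClosure hp hm'.1).mem_of_transfer_mem_Bdot hback h)
  apply subset_antisymm
  · refine tightClosure_subset ?_ (by rw [hsuper]; exact subset_tightClosure)
    exact (isTight_transfer_iff (iff_of_false hsA htA)).2 (isTight_tightClosure hp hm.1)
  · refine tightClosure_subset ?_ (by rw [← hsuper]; exact subset_tightClosure)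
    exact (isTight_transfer_iff (iff_of_false hsA' htA')).1 (isTight_tightClosure hp hm'.1)

/-- Junk value `0` when `A = univ`. -/
def maxOutside (m : α → ℤ) (A : Finset α) : ℤ :=
  if h : (univ \ A).Nonempty then (univ \ A).sup' h m else 0

theorem isGreatest_maxOutside {A : Finset α} (hA : A ≠ univ) :
    IsGreatest {v | ∃ u, u ∉ A ∧ m u = v} (maxOutside m A) := by
  have h : (univ \ A).Nonempty := by
    rwa [sdiff_nonempty, univ_subset_iff]
  rw [maxOutside, dif_pos h]
  obtain ⟨u, hu, hmu⟩ := exists_mem_eq_sup' h m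
  refine ⟨⟨u, (mem_sdiff.1 hu).2, hmu.symm⟩, ?_⟩
  rintro _ ⟨v, hv, rfl⟩
  exact le_sup' m (mem_sdiff.2 ⟨mem_univ v, hv⟩)

theorem maxOutside_transfer {A : Finset α} (hst : s ≠ t) (hv : m t = m s - 1)
    (h : s ∈ A ↔ t ∈ A) : maxOutside (transfer m s t) A = maxOutside m A := by
  by_cases hA : A = univ
  · simp [maxOutside, hA]
  have hswap : ∀ u, Equiv.swap s t u ∈ A ↔ u ∈ A := by
    intro u
    rcases eq_or_ne u s with rfl | hus
    · rw [Equiv.swap_apply_left]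
      exact h.symm
    rcases eq_or_ne u t with rfl | hut
    · rw [Equiv.swap_apply_right]
      exact h
    rw [Equiv.swap_apply_of_ne_of_ne hus hut]
  have hvalues : {v | ∃ u, u ∉ A ∧ transfer m s t u = v} = {v | ∃ u, u ∉ A ∧ m u = v} := by
    rw [transfer_eq_comp_swap hst hv]
    ext v
    constructor
    · rintro ⟨u, hu, rfl⟩
      exact ⟨Equiv.swap s t u, by rwa [hswap], rfl⟩
    · rintro ⟨u, hu, rfl⟩
      exact ⟨Equiv.swap s t u, by rwa [hswap], by simp⟩
  exact (hvalues ▸ isGreatest_maxOutside hA).unique (isGreatest_maxOutside hA)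

/-- `Cᵢ(m)`, continued by `univ` once `univ` is reached. -/
def canonicalChain (p : Finset α → ℤ) (m : α → ℤ) : ℕ → Finset α
  | 0 => ∅
  | i + 1 =>
    if canonicalChain p m i = univ then univ
    else tightClosure p m (superlevel m (maxOutside m (canonicalChain p m i)))

theorem canonicalChain_succ_of_ne {i : ℕ} (h : canonicalChain p m i ≠ univ) :
    canonicalChain p m (i + 1) =
      tightClosure p m (superlevel m (maxOutside m (canonicalChain p m i))) := by
  rw [canonicalChain, if_neg h]

theorem isTight_canonicalChain (hp : Supermodular p) (h0 : p ∅ = 0) (hm : m ∈ Bdot p) :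
    ∀ i, IsTight p m (canonicalChain p m i)
  | 0 => by simp [canonicalChain, IsTight, h0]
  | i + 1 => by
    rw [canonicalChain]
    split_ifs
    exacts [hm.2, isTight_tightClosure hp hm]

theorem canonicalChain_ssubset_succ {i : ℕ} (h : canonicalChain p m i ≠ univ) :
    canonicalChain p m i ⊂ canonicalChain p m (i + 1) := by
  rw [canonicalChain_succ_of_ne h]
  obtain ⟨⟨w, hw, hmw⟩, -⟩ := isGreatest_maxOutside (m := m) h
  refine (ssubset_iff_of_subset ?_).2 ⟨w, subset_tightClosure (mem_superlevel.2 hmw.ge), hw⟩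
  cases i with
  | zero => exact empty_subset _
  | succ j =>
    have hj : canonicalChain p m j ≠ univ := fun hj => h (by rw [canonicalChain, if_pos hj])
    obtain ⟨⟨w', hw', hmw'⟩, -⟩ := isGreatest_maxOutside (m := m) h
    rw [canonicalChain_succ_of_ne hj] at hw' hmw' ⊢
    refine tightClosure_mono (superlevel_anti ?_)
    by_contra! hlt
    exact hw' (subset_tightClosure (mem_superlevel.2 (hmw' ▸ hlt.le)))

theorem DecMin.canonicalChain_transfer (hp : Supermodular p) (h0 : p ∅ = 0)
    (hm : DecMin p m) (hst : s ≠ t) (hx : transfer m s t ∈ Bdot p) (hv : m t = m s - 1) :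
    canonicalChain p (transfer m s t) = canonicalChain p m ∧
      ∀ i, maxOutside (transfer m s t) (canonicalChain p (transfer m s t) i) =
        maxOutside m (canonicalChain p m i) := by
  have hmax : ∀ i, canonicalChain p (transfer m s t) i = canonicalChain p m i →
      maxOutside (transfer m s t) (canonicalChain p m i) = maxOutside m (canonicalChain p m i) :=
    fun i hi => maxOutside_transfer hst hv <| mem_iff_of_isTight_transfer hm.1 hx
      (isTight_canonicalChain hp h0 hm.1 i) (hi ▸ isTight_canonicalChain hp h0 hx i)
  have hchain : ∀ i, canonicalChain p (transfer m s t) i = canonicalChain p m i := by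
    intro i
    induction i with
    | zero => rfl
    | succ i ih =>
      rw [canonicalChain, canonicalChain, ih, hmax i ih]
      split_ifs
      · rfl
      rcases le_or_gt (maxOutside m (canonicalChain p m i)) (m s) with hb | hb
      · exact tightClosure_superlevel_transfer_of_le hm.1 hst hx hv hb
      · exact hm.tightClosure_superlevel_transfer_of_lt hp h0 hst hx hv hb
  exact ⟨funext hchain, fun i => by rw [hchain i, hmax i (hchain i)]⟩

theorem distL1_transfer_lt (hs : z s < m s) (ht : m t < z t) :
    distL1 (transfer m s t) z < distL1 m z := by
  refine Finset.sum_lt_sum (fun u _ => ?_) ⟨s, mem_univ s, ?_⟩ <;>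
  · simp only [transfer]
    split_ifs <;> subst_vars <;> omega

/-- `hmax` says that `s` is a largest discrepancy between `m` and `z`. -/
theorem DecMin.exists_closer (hp : Supermodular p) (h0 : p ∅ = 0) (hm : DecMin p m)
    (hz : DecMin p z) (hs : z s < m s) (hmax : ∀ u, m u < z u → z u ≤ m s) :
    ∃ m', DecMin p m' ∧ distL1 m' z < distL1 m z ∧
      canonicalChain p m' = canonicalChain p m ∧
      ∀ i, maxOutside m' (canonicalChain p m' i) = maxOutside m (canonicalChain p m i) := by
  obtain ⟨t, ht, hx⟩ := exists_transfer_mem_Bdot hp hm.1 hz.1 hs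
  have hst : s ≠ t := by
    rintro rfl
    omega
  have hv : m t = m s - 1 := by
    have := hm.sub_one_le_of_transfer hst hx
    have := hmax t ht
    omega
  exact ⟨_, hm.transfer_of_eq_sub_one hst hx hv, distL1_transfer_lt hs ht,
    hm.canonicalChain_transfer hp h0 hst hx hv⟩

theorem DecMin.canonicalChain_eq (hp : Supermodular p) (h0 : p ∅ = 0) (hm : DecMin p m)
    (hz : DecMin p z) :
    canonicalChain p m = canonicalChain p z ∧
      ∀ i, maxOutside m (canonicalChain p m i) = maxOutside z (canonicalChain p z i) := by
  induction hd : distL1 m z using Nat.strong_induction_on generalizing m z with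
  | _ n ih =>
  by_cases hmz : m = z
  · subst hmz
    exact ⟨rfl, fun _ => rfl⟩
  obtain ⟨u₀, hu₀⟩ := Function.ne_iff.1 hmz
  obtain ⟨s, hs, hsmax⟩ := exists_max_image {u | m u ≠ z u} (fun u => max (m u) (z u))
    ⟨u₀, by simpa using hu₀⟩
  have hsmax' : ∀ u, m u ≠ z u → max (m u) (z u) ≤ max (m s) (z s) :=
    fun u hu => hsmax u (by simpa using hu)
  rcases lt_or_gt_of_ne (mem_filter.1 hs).2 with hlt | hgt
  · obtain ⟨z', hz', hd', hC, hβ⟩ := hz.exists_closer hp h0 hm hlt fun u hu => by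
      have := hsmax' u hu.ne'
      omega
    have := distL1_comm m z'
    have := distL1_comm z m
    obtain ⟨h₁, h₂⟩ := ih _ (by omega) hm hz' rfl
    exact ⟨h₁.trans hC, fun i => (h₂ i).trans (hβ i)⟩
  · obtain ⟨m', hm', hd', hC, hβ⟩ := hm.exists_closer hp h0 hz hgt fun u hu => by
      have := hsmax' u hu.ne
      omega
    obtain ⟨h₁, h₂⟩ := ih _ (hd ▸ hd') hm' hz rfl
    exact ⟨hC.symm.trans h₁, fun i => (hβ i).symm.trans (h₂ i)⟩

/-- One step `(Cᵢ, βᵢ₊₁, Cᵢ₊₁) = (A, b, B)` of the recursion in the theorem. -/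
def IsCanonicalStep (p : Finset α → ℤ) (m : α → ℤ) (A B : Finset α) (b : ℤ) : Prop :=
  A ≠ univ ∧ IsGreatest {v : ℤ | ∃ s : α, s ∉ A ∧ m s = v} b ∧
    ∀ s : α, s ∈ B ↔
      ∀ X : Finset α, (∑ v ∈ X, m v = p X) → (∀ t : α, b ≤ m t → t ∈ X) → s ∈ X

theorem IsCanonicalStep.eq_maxOutside_tightClosure {A B : Finset α} {b : ℤ}
    (h : IsCanonicalStep p m A B b) :
    b = maxOutside m A ∧ B = tightClosure p m (superlevel m b) := by
  obtain ⟨hA, hb, hB⟩ := h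
  refine ⟨hb.unique (isGreatest_maxOutside hA), ?_⟩
  ext s
  simp only [hB, mem_tightClosure, subset_iff, mem_superlevel, IsTight]

theorem eq_canonicalChain_of_isCanonicalStep {q : ℕ} {C : ℕ → Finset α} {β : ℕ → ℤ}
    (hC0 : C 0 = ∅) (hrec : ∀ i < q, IsCanonicalStep p m (C i) (C (i + 1)) (β (i + 1))) :
    (∀ i ≤ q, C i = canonicalChain p m i) ∧
      ∀ i < q, β (i + 1) = maxOutside m (canonicalChain p m i) := by
  have hC : ∀ i ≤ q, C i = canonicalChain p m i := by
    intro i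
    induction i with
    | zero => exact fun _ => hC0
    | succ i ih =>
      intro hi
      obtain ⟨hb, hB⟩ := (hrec i hi).eq_maxOutside_tightClosure
      have hCi := ih (by omega)
      rw [hB, hb, hCi, canonicalChain_succ_of_ne (hCi ▸ (hrec i hi).1)]
  exact ⟨hC, fun i hi => by rw [(hrec i hi).eq_maxOutside_tightClosure.1, hC i hi.le]⟩

end Chain

theorem stmt9_general [Fintype α] [DecidableEq α]
    (p : Finset α → ℤ) (hp : Supermodular p) (h0 : p ∅ = 0)
    (m z : α → ℤ) (hm : DecMin p m) (hz : DecMin p z)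
    (q q' : ℕ) (C C' : ℕ → Finset α) (β β' : ℕ → ℤ)
    (hC0 : C 0 = ∅) (hC0' : C' 0 = ∅)
    -- the recursion for m
    (hrec : ∀ i : ℕ, i < q →
      C i ≠ Finset.univ ∧
      IsGreatest {v : ℤ | ∃ s : α, s ∉ C i ∧ m s = v} (β (i + 1)) ∧
      (∀ s : α, s ∈ C (i + 1) ↔
        ∀ X : Finset α, (∑ v ∈ X, m v = p X) →
          (∀ t : α, β (i + 1) ≤ m t → t ∈ X) → s ∈ X))
    (hstop : C q = Finset.univ)
    -- the recursion for z
    (hrec' : ∀ i : ℕ, i < q' →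
      C' i ≠ Finset.univ ∧
      IsGreatest {v : ℤ | ∃ s : α, s ∉ C' i ∧ z s = v} (β' (i + 1)) ∧
      (∀ s : α, s ∈ C' (i + 1) ↔
        ∀ X : Finset α, (∑ v ∈ X, z v = p X) →
          (∀ t : α, β' (i + 1) ≤ z t → t ∈ X) → s ∈ X))
    (hstop' : C' q' = Finset.univ) :
    (∀ i : ℕ, i < q → C i ⊂ C (i + 1)) ∧
    q = q' ∧
    (∀ i : ℕ, 1 ≤ i → i ≤ q → β i = β' i ∧ C i = C' i) := by
  obtain ⟨hCm, hβm⟩ := eq_canonicalChain_of_isCanonicalStep hC0 hrec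
  obtain ⟨hCz, hβz⟩ := eq_canonicalChain_of_isCanonicalStep hC0' hrec'
  obtain ⟨hchain, hval⟩ := hm.canonicalChain_eq hp h0 hz
  have hqq : q = q' := by
    by_contra hne
    rcases Nat.lt_or_gt_of_ne hne with h | h
    · exact (hrec' q h).1 (by rw [hCz q h.le, ← hchain, ← hCm q le_rfl, hstop])
    · exact (hrec q' h).1 (by rw [hCm q' h.le, hchain, ← hCz q' le_rfl, hstop'])
  subst hqq
  refine ⟨fun i hi => ?_, rfl, fun i hi₁ hiq => ?_⟩
  · rw [hCm i hi.le, hCm (i + 1) hi]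
    exact canonicalChain_ssubset_succ (hCm i hi.le ▸ (hrec i hi).1)
  · obtain ⟨j, rfl⟩ := Nat.exists_eq_add_of_le' hi₁
    rw [hβm j hiq, hβz j hiq, hval j, hCm _ hiq, hCz _ hiq, hchain]
    exact ⟨rfl, rfl⟩

/-- The canonical chain and essential value-sequence obtained from a dec-min element
of `Ḃ(p)` are strictly increasing / well defined and do not depend on the choice
of the dec-min element. -/
theorem stmt9 [Fintype α] [DecidableEq α] [Nonempty α]
    (p : Finset α → ℤ) (hp : Supermodular p) (h0 : p ∅ = 0)
    (m z : α → ℤ) (hm : DecMin p m) (hz : DecMin p z)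
    (q q' : ℕ) (C C' : ℕ → Finset α) (β β' : ℕ → ℤ)
    (hC0 : C 0 = ∅) (hC0' : C' 0 = ∅)
    -- the recursion for m
    (hrec : ∀ i : ℕ, i < q →
      C i ≠ Finset.univ ∧
      IsGreatest {v : ℤ | ∃ s : α, s ∉ C i ∧ m s = v} (β (i + 1)) ∧
      (∀ s : α, s ∈ C (i + 1) ↔
        ∀ X : Finset α, (∑ v ∈ X, m v = p X) →
          (∀ t : α, β (i + 1) ≤ m t → t ∈ X) → s ∈ X))
    (hstop : C q = Finset.univ)
    -- the recursion for z
    (hrec' : ∀ i : ℕ, i < q' →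
      C' i ≠ Finset.univ ∧
      IsGreatest {v : ℤ | ∃ s : α, s ∉ C' i ∧ z s = v} (β' (i + 1)) ∧
      (∀ s : α, s ∈ C' (i + 1) ↔
        ∀ X : Finset α, (∑ v ∈ X, z v = p X) →
          (∀ t : α, β' (i + 1) ≤ z t → t ∈ X) → s ∈ X))
    (hstop' : C' q' = Finset.univ) :
    (∀ i : ℕ, i < q → C i ⊂ C (i + 1)) ∧
    q = q' ∧
    (∀ i : ℕ, 1 ≤ i → i ≤ q → β i = β' i ∧ C i = C' i) :=
  stmt9_general p hp h0 m z hm hz q q' C C' β β' hC0 hC0' hrec hstop hrec' hstop'
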